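/- Let m1, m2 ≥ 1 and let W ⊆ GL₄(ℂ) be the (finite) subgroup generated by the matrices s_p (1 ≤ p ≤ m1) and t_q (1 ≤ q ≤ m2). In the ℂ-algebra (MonoidAlgebra ℂ W) ⊗ 𝒞, define for x ∈ ℂ⁴ the element O(x) := Σ_{p=1}^{m1} κ_{α_p}·B(x,α_p)·(s_p ⊗ ι(α_p)) + Σ_{q=1}^{m2} κ_{β_q}·B(x,β_q)·(t_q ⊗ ι(β_q)), where B(x,y) = Σ_j x_j y_j. Then for every x in the span of the first two standard basis vectors and every y in the span of the last two standard basis vectors, O(x)·O(y) + O(y)·O(x) = 0. -/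

import Mathlib

/-!
For `x` in the `(e₁, e₂)`-plane only the `α`-terms of `O(x)` survive, and for `y` in the
`(e₃, e₄)`-plane only the `β`-terms of `O(y)`. Every `α_p` is orthogonal to every `β_q`, so
`ι(α_p)` and `ι(β_q)` anticommute in `𝒞`, while `s_p` and `t_q` commute because they act on
complementary coordinates. Hence each product `(s_p ⊗ ι α_p)(t_q ⊗ ι β_q)` is cancelled by its
swap, term by term.
-/

namespace Stmt17

/-- The quadratic form `Q(x) = x1² + x2² + x3² + x4²` on `ℂ⁴`. -/
noncomputable def Q4 : QuadraticForm ℂ (Fin 4 → ℂ) :=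
  QuadraticMap.weightedSumSquares ℂ (fun _ : Fin 4 => (1 : ℂ))

/-- The Clifford algebra `𝒞` of `Q4`. -/
abbrev Cl := CliffordAlgebra Q4

/-- The canonical generators `e_j = ι(standard basis vector)` of `𝒞`. -/
noncomputable def eC (j : Fin 4) : Cl := CliffordAlgebra.ι Q4 (Pi.single j 1)

/-- `θ_a = (e_{2a−1} + i e_{2a})/2` for `a ∈ {1,2}` (0-indexed `a : Fin 2`). -/
noncomputable def θ (a : Fin 2) : Cl :=
  (2 : ℂ)⁻¹ • (eC ⟨2 * a.val, by have := a.isLt; omega⟩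
    + Complex.I • eC ⟨2 * a.val + 1, by have := a.isLt; omega⟩)

/-- `θ̄_a = (e_{2a−1} − i e_{2a})/2` for `a ∈ {1,2}` (0-indexed `a : Fin 2`). -/
noncomputable def θbar (a : Fin 2) : Cl :=
  (2 : ℂ)⁻¹ • (eC ⟨2 * a.val, by have := a.isLt; omega⟩
    - Complex.I • eC ⟨2 * a.val + 1, by have := a.isLt; omega⟩)

open scoped TensorProduct

/-- The reflection `s_p ∈ D_{2m1} ⊂ O(4)` acting on the first two coordinates. -/
noncomputable def sMat (m1 : ℕ) (p : ℕ) : Matrix (Fin 4) (Fin 4) ℂ :=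
  !![(Real.cos (2 * p * Real.pi / m1) : ℂ), (Real.sin (2 * p * Real.pi / m1) : ℂ), 0, 0;
     (Real.sin (2 * p * Real.pi / m1) : ℂ), -(Real.cos (2 * p * Real.pi / m1) : ℂ), 0, 0;
     0, 0, 1, 0;
     0, 0, 0, 1]

/-- The reflection `t_q ∈ D_{2m2} ⊂ O(4)` acting on the last two coordinates. -/
noncomputable def tMat (m2 : ℕ) (q : ℕ) : Matrix (Fin 4) (Fin 4) ℂ :=
  !![1, 0, 0, 0;
     0, 1, 0, 0;
     0, 0, (Real.cos (2 * q * Real.pi / m2) : ℂ), (Real.sin (2 * q * Real.pi / m2) : ℂ);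
     0, 0, (Real.sin (2 * q * Real.pi / m2) : ℂ), -(Real.cos (2 * q * Real.pi / m2) : ℂ)]

/-- The root `α_p = (sin(pπ/m1), −cos(pπ/m1), 0, 0)`. -/
noncomputable def αv (m1 : ℕ) (p : ℕ) : Fin 4 → ℂ :=
  ![(Real.sin (p * Real.pi / m1) : ℂ), -(Real.cos (p * Real.pi / m1) : ℂ), 0, 0]

/-- The root `β_q = (0, 0, sin(qπ/m2), −cos(qπ/m2))`. -/
noncomputable def βv (m2 : ℕ) (q : ℕ) : Fin 4 → ℂ :=
  ![0, 0, (Real.sin (q * Real.pi / m2) : ℂ), -(Real.cos (q * Real.pi / m2) : ℂ)]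

/-- The subgroup `W ⊆ GL₄(ℂ)` generated by the reflections `s_p` (`1 ≤ p ≤ m1`)
and `t_q` (`1 ≤ q ≤ m2`). -/
noncomputable def Wgrp (m1 m2 : ℕ) : Subgroup (GL (Fin 4) ℂ) :=
  Subgroup.closure {A : GL (Fin 4) ℂ |
    (∃ p, 1 ≤ p ∧ p ≤ m1 ∧ (A : Matrix (Fin 4) (Fin 4) ℂ) = sMat m1 p) ∨
    (∃ q, 1 ≤ q ∧ q ≤ m2 ∧ (A : Matrix (Fin 4) (Fin 4) ℂ) = tMat m2 q)}

/-- The bilinear form `B(x,y) = Σ_j x_j y_j`. -/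
noncomputable def Bform (x y : Fin 4 → ℂ) : ℂ := ∑ j, x j * y j

/-- The one-index symmetry
`O(x) = Σ_p κ_{α_p} B(x,α_p) (s_p ⊗ ι(α_p)) + Σ_q κ_{β_q} B(x,β_q) (t_q ⊗ ι(β_q))`
in `ℂ[W] ⊗ 𝒞`. -/
noncomputable def Osym (m1 m2 : ℕ) (κα κβ : ℕ → ℂ)
    (s t : ℕ → (Wgrp m1 m2)) (x : Fin 4 → ℂ) :
    MonoidAlgebra ℂ (Wgrp m1 m2) ⊗[ℂ] Cl :=
  (∑ p ∈ Finset.Icc 1 m1, (κα p * Bform x (αv m1 p)) •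
      (MonoidAlgebra.of ℂ (Wgrp m1 m2) (s p) ⊗ₜ[ℂ] CliffordAlgebra.ι Q4 (αv m1 p)))
  + ∑ q ∈ Finset.Icc 1 m2, (κβ q * Bform x (βv m2 q)) •
      (MonoidAlgebra.of ℂ (Wgrp m1 m2) (t q) ⊗ₜ[ℂ] CliffordAlgebra.ι Q4 (βv m2 q))

end Stmt17

open scoped TensorProduct

theorem Finset.sum_mul_sum_add_swap_eq_zero {R ι κ : Type*} [NonUnitalNonAssocSemiring R]
    {s : Finset ι} {t : Finset κ} {f : ι → R} {g : κ → R}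
    (h : ∀ i ∈ s, ∀ j ∈ t, f i * g j + g j * f i = 0) :
    (∑ i ∈ s, f i) * (∑ j ∈ t, g j) + (∑ j ∈ t, g j) * (∑ i ∈ s, f i) = 0 := by
  rw [Finset.sum_mul_sum, Finset.sum_mul_sum, Finset.sum_comm (s := t), ← Finset.sum_add_distrib]
  refine Finset.sum_eq_zero fun i hi => ?_
  rw [← Finset.sum_add_distrib]
  exact Finset.sum_eq_zero fun j hj => h i hi j hj

theorem smul_mul_smul_add_swap_eq_zero {R A : Type*} [CommSemiring R] [Semiring A] [Algebra R A]
    {u v : A} (h : u * v + v * u = 0) (c d : R) :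
    (c • u) * (d • v) + (d • v) * (c • u) = 0 := by
  rw [smul_mul_smul_comm, smul_mul_smul_comm, mul_comm d c, ← smul_add, h, smul_zero]

theorem Algebra.TensorProduct.tmul_mul_tmul_add_swap_eq_zero {R A B : Type*} [CommSemiring R]
    [Semiring A] [Algebra R A] [Semiring B] [Algebra R B] {a a' : A} {b b' : B}
    (ha : Commute a a') (hb : b * b' + b' * b = 0) :
    (a ⊗ₜ[R] b) * (a' ⊗ₜ[R] b') + (a' ⊗ₜ[R] b') * (a ⊗ₜ[R] b) = 0 := by
  rw [tmul_mul_tmul, tmul_mul_tmul, ha.eq, ← TensorProduct.tmul_add, hb, TensorProduct.tmul_zero]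

theorem Matrix.GeneralLinearGroup.commute_of_commute_val {n R : Type*} [Fintype n] [DecidableEq n]
    [CommRing R] {G : Subgroup (GL n R)} {g h : G}
    (hgh : Commute ((g : GL n R) : Matrix n n R) ((h : GL n R) : Matrix n n R)) : Commute g h :=
  Subtype.ext <| Units.ext hgh

namespace Stmt17

theorem commute_sMat_tMat (m1 m2 p q : ℕ) : Commute (sMat m1 p) (tMat m2 q) := by
  ext i j
  fin_cases i <;> fin_cases j <;>
    simp [sMat, tMat, Matrix.mul_apply, Fin.sum_univ_four]

abbrev lowPlane : Submodule ℂ (Fin 4 → ℂ) :=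
  Submodule.span ℂ {Pi.single 0 1, Pi.single 1 1}

abbrev highPlane : Submodule ℂ (Fin 4 → ℂ) :=
  Submodule.span ℂ {Pi.single 2 1, Pi.single 3 1}

theorem mul_apply_eq_zero_of_mem_lowPlane_of_mem_highPlane {x y : Fin 4 → ℂ}
    (hx : x ∈ lowPlane) (hy : y ∈ highPlane) (i : Fin 4) : x i * y i = 0 := by
  obtain ⟨a, b, rfl⟩ := Submodule.mem_span_pair.mp hx
  obtain ⟨c, d, rfl⟩ := Submodule.mem_span_pair.mp hy
  fin_cases i <;> simp

theorem αv_mem_lowPlane (m1 p : ℕ) : αv m1 p ∈ lowPlane :=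
  Submodule.mem_span_pair.mpr ⟨αv m1 p 0, αv m1 p 1, by ext i; fin_cases i <;> simp [αv]⟩

theorem βv_mem_highPlane (m2 q : ℕ) : βv m2 q ∈ highPlane :=
  Submodule.mem_span_pair.mpr ⟨βv m2 q 2, βv m2 q 3, by ext i; fin_cases i <;> simp [βv]⟩

theorem Bform_comm (x y : Fin 4 → ℂ) : Bform x y = Bform y x := by
  simp only [Bform, mul_comm]

theorem Bform_eq_zero_of_mul_apply_eq_zero {x y : Fin 4 → ℂ} (h : ∀ i, x i * y i = 0) :
    Bform x y = 0 :=
  Finset.sum_eq_zero fun i _ => h i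

theorem Q4_isOrtho_of_mul_apply_eq_zero {x y : Fin 4 → ℂ} (h : ∀ i, x i * y i = 0) :
    Q4.IsOrtho x y := by
  simp only [QuadraticMap.isOrtho_def, Q4, QuadraticMap.weightedSumSquares_apply, one_smul,
    Pi.add_apply, ← Finset.sum_add_distrib]
  refine Finset.sum_congr rfl fun i _ => ?_
  linear_combination 2 * h i

section Osym

variable {m1 m2 : ℕ} {κα κβ : ℕ → ℂ} {s t : ℕ → Wgrp m1 m2}

theorem Osym_eq_sum_αv {x : Fin 4 → ℂ} (hx : ∀ q, Bform x (βv m2 q) = 0) :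
    Osym m1 m2 κα κβ s t x = ∑ p ∈ Finset.Icc 1 m1, (κα p * Bform x (αv m1 p)) •
      (MonoidAlgebra.of ℂ (Wgrp m1 m2) (s p) ⊗ₜ[ℂ] CliffordAlgebra.ι Q4 (αv m1 p)) := by
  rw [Osym, add_eq_left]
  exact Finset.sum_eq_zero fun q _ => by rw [hx q, mul_zero, zero_smul]

theorem Osym_eq_sum_βv {y : Fin 4 → ℂ} (hy : ∀ p, Bform y (αv m1 p) = 0) :
    Osym m1 m2 κα κβ s t y = ∑ q ∈ Finset.Icc 1 m2, (κβ q * Bform y (βv m2 q)) •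
      (MonoidAlgebra.of ℂ (Wgrp m1 m2) (t q) ⊗ₜ[ℂ] CliffordAlgebra.ι Q4 (βv m2 q)) := by
  rw [Osym, add_eq_right]
  exact Finset.sum_eq_zero fun p _ => by rw [hy p, mul_zero, zero_smul]

end Osym

theorem Osym_anticommute_general (m1 m2 : ℕ)
    (κα κβ : ℕ → ℂ)
    (s t : ℕ → (Wgrp m1 m2))
    (hs : ∀ p, ((s p : GL (Fin 4) ℂ) : Matrix (Fin 4) (Fin 4) ℂ) = sMat m1 p)
    (ht : ∀ q, ((t q : GL (Fin 4) ℂ) : Matrix (Fin 4) (Fin 4) ℂ) = tMat m2 q)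
    (x y : Fin 4 → ℂ)
    (hx : x ∈ Submodule.span ℂ
      ({Pi.single (0 : Fin 4) (1 : ℂ), Pi.single (1 : Fin 4) (1 : ℂ)} : Set (Fin 4 → ℂ)))
    (hy : y ∈ Submodule.span ℂ
      ({Pi.single (2 : Fin 4) (1 : ℂ), Pi.single (3 : Fin 4) (1 : ℂ)} : Set (Fin 4 → ℂ))) :
    Osym m1 m2 κα κβ s t x * Osym m1 m2 κα κβ s t y
      + Osym m1 m2 κα κβ s t y * Osym m1 m2 κα κβ s t x = 0 := by
  have hxβ (q : ℕ) : Bform x (βv m2 q) = 0 := Bform_eq_zero_of_mul_apply_eq_zero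
    (mul_apply_eq_zero_of_mem_lowPlane_of_mem_highPlane hx (βv_mem_highPlane m2 q))
  have hyα (p : ℕ) : Bform y (αv m1 p) = 0 := by
    rw [Bform_comm]
    exact Bform_eq_zero_of_mul_apply_eq_zero
      (mul_apply_eq_zero_of_mem_lowPlane_of_mem_highPlane (αv_mem_lowPlane m1 p) hy)
  rw [Osym_eq_sum_αv hxβ, Osym_eq_sum_βv hyα]
  refine Finset.sum_mul_sum_add_swap_eq_zero fun p _ q _ => smul_mul_smul_add_swap_eq_zero ?_ _ _
  refine Algebra.TensorProduct.tmul_mul_tmul_add_swap_eq_zero ?_ ?_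
  · have hst : Commute (s p) (t q) := by
      apply Matrix.GeneralLinearGroup.commute_of_commute_val
      rw [hs, ht]
      exact commute_sMat_tMat m1 m2 p q
    exact hst.map (MonoidAlgebra.of ℂ (Wgrp m1 m2))
  · exact CliffordAlgebra.ι_mul_ι_add_swap_of_isOrtho <| Q4_isOrtho_of_mul_apply_eq_zero <|
      mul_apply_eq_zero_of_mem_lowPlane_of_mem_highPlane (αv_mem_lowPlane m1 p)
        (βv_mem_highPlane m2 q)

/-- If `x` lies in the span of the first two standard basis vectors and `y` in the span
of the last two, then `O(x) O(y) + O(y) O(x) = 0` in `ℂ[W] ⊗ 𝒞`. -/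
theorem Osym_anticommute (m1 m2 : ℕ) (h1 : 1 ≤ m1) (h2 : 1 ≤ m2)
    (κ1 κ2 κ3 κ4 : ℂ) (κα κβ : ℕ → ℂ)
    (hκα : ∀ p : ℕ, κα p = if Odd m1 then κ1 else (if Odd p then κ1 else κ2))
    (hκβ : ∀ q : ℕ, κβ q = if Odd m2 then κ3 else (if Odd q then κ3 else κ4))
    (s t : ℕ → (Wgrp m1 m2))
    (hs : ∀ p, ((s p : GL (Fin 4) ℂ) : Matrix (Fin 4) (Fin 4) ℂ) = sMat m1 p)
    (ht : ∀ q, ((t q : GL (Fin 4) ℂ) : Matrix (Fin 4) (Fin 4) ℂ) = tMat m2 q)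
    (x y : Fin 4 → ℂ)
    (hx : x ∈ Submodule.span ℂ
      ({Pi.single (0 : Fin 4) (1 : ℂ), Pi.single (1 : Fin 4) (1 : ℂ)} : Set (Fin 4 → ℂ)))
    (hy : y ∈ Submodule.span ℂ
      ({Pi.single (2 : Fin 4) (1 : ℂ), Pi.single (3 : Fin 4) (1 : ℂ)} : Set (Fin 4 → ℂ))) :
    Osym m1 m2 κα κβ s t x * Osym m1 m2 κα κβ s t y
      + Osym m1 m2 κα κβ s t y * Osym m1 m2 κα κβ s t x = 0 :=
  Osym_anticommute_general m1 m2 κα κβ s t hs ht x y hx hy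

end Stmt17
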